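/- arXiv:1405.5567 — 5 statements merged into one kernel-verified Lean document; each statement's English description precedes it below -/
import Mathlib

section
/- Let I be an ideal of the formal power series ring C[[x₁,...,xₙ]] with maximal ideal m, and let m ∈ ℕ. If the image of I in the quotient ring C[[x]]/m^(m+1) (the ring of m-jets) has C-codimension at most m, then m^m ⊆ I. -/
/-!
The ideals `I + 𝔪^k` decrease from `I + 𝔪^0 = ⊤` to `I + 𝔪^(m+1)`, whose codimension is that of
the jet ideal, at most `m`. A chain of `m + 1` strict inclusions would force codimension at least
`m + 1`, so `I + 𝔪^k = I + 𝔪^(k+1)` for some `k ≤ m`, i.e. `𝔪^k ⊆ I + 𝔪 • 𝔪^k`. Since `𝔪` is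
finitely generated and lies in the Jacobson radical of the local ring `ℂ[[x]]`, Nakayama's lemma
gives `𝔪^m ⊆ 𝔪^k ⊆ I`.
-/

open MvPowerSeries

theorem Submodule.rank_quotient_add_one_le_of_lt {K V : Type*} [DivisionRing K]
    [AddCommGroup V] [Module K V] {p q : Submodule K V} (h : p < q) :
    Module.rank K (V ⧸ q) + 1 ≤ Module.rank K (V ⧸ p) := by
  have hq : q.map p.mkQ ≠ ⊥ := by
    rw [Ne, ← LinearMap.le_ker_iff_map, Submodule.ker_mkQ]
    exact h.not_ge
  rw [← rank_quotient_add_rank_of_divisionRing (q.map p.mkQ),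
    ← (p.quotientQuotientEquivQuotient q h.le).rank_eq]
  gcongr
  exact Cardinal.one_le_iff_ne_zero.mpr (Submodule.rank_eq_zero.not.mpr hq)

theorem Submodule.natCast_le_rank_quotient {K V : Type*} [DivisionRing K]
    [AddCommGroup V] [Module K V] {N : ℕ → Submodule K V} {t : ℕ}
    (h : ∀ k < t, N (k + 1) < N k) : (t : Cardinal) ≤ Module.rank K (V ⧸ N t) := by
  induction t with
  | zero => simp
  | succ t ih =>
    calc ((t + 1 : ℕ) : Cardinal) = t + 1 := Nat.cast_succ t
      _ ≤ Module.rank K (V ⧸ N t) + 1 := by gcongr; exact ih fun k hk => h k (by omega)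
      _ ≤ Module.rank K (V ⧸ N (t + 1)) :=
        Submodule.rank_quotient_add_one_le_of_lt (h t (by omega))

theorem Ideal.exists_sup_pow_succ_eq_of_rank_quotient_le {K A : Type*} [Field K] [CommRing A]
    [Algebra K A] (I 𝔪 : Ideal A) {m : ℕ}
    (h : Module.rank K (A ⧸ I ⊔ 𝔪 ^ (m + 1)) ≤ m) :
    ∃ k ≤ m, I ⊔ 𝔪 ^ (k + 1) = I ⊔ 𝔪 ^ k := by
  by_contra! hne
  let N (k : ℕ) : Submodule K A := (I ⊔ 𝔪 ^ k).restrictScalars K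
  have hlt : ∀ k < m + 1, N (k + 1) < N k := fun k hk =>
    (sup_le_sup_left (Ideal.pow_le_pow_right k.le_succ) I).lt_of_ne (hne k (by omega))
  have hrank := (Submodule.natCast_le_rank_quotient hlt).trans_eq
    (Submodule.Quotient.restrictScalarsEquiv K _).rank_eq
  exact (hrank.trans h).not_gt (by exact_mod_cast m.lt_succ_self)

theorem Ideal.pow_le_of_sup_pow_succ_eq {R : Type*} [CommRing R] {I 𝔪 : Ideal R} (hfg : 𝔪.FG)
    (hjac : 𝔪 ≤ jacobson ⊥) {k : ℕ} (h : I ⊔ 𝔪 ^ (k + 1) = I ⊔ 𝔪 ^ k) : 𝔪 ^ k ≤ I :=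
  Submodule.le_of_le_smul_of_le_jacobson_bot (hfg.pow (n := k)) hjac <| by
    rw [smul_eq_mul, ← pow_succ', h]
    exact le_sup_right

theorem MvPowerSeries.span_range_X_le_maximalIdeal {σ R : Type*} [CommRing R] [IsLocalRing R] :
    Ideal.span (Set.range (X : σ → MvPowerSeries σ R)) ≤ IsLocalRing.maximalIdeal _ := by
  rw [Ideal.span_le]
  rintro _ ⟨i, rfl⟩
  rw [SetLike.mem_coe, IsLocalRing.mem_maximalIdeal, mem_nonunits_iff, isUnit_iff_constantCoeff,
    constantCoeff_X]
  exact not_isUnit_zero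

set_option synthInstance.maxHeartbeats 1000000 in
/-- If the image of an ideal `I` of `ℂ[[x₁,…,xₙ]]` in the ring of `m`-jets
`ℂ[[x]]/𝔪^(m+1)` has ℂ-codimension at most `m`, then `𝔪^m ⊆ I`. -/
theorem mpow_le_of_jet_codim_le (n m : ℕ)
    (𝔪 : Ideal (MvPowerSeries (Fin n) ℂ))
    (h𝔪 : 𝔪 = Ideal.span (Set.range (X : Fin n → MvPowerSeries (Fin n) ℂ)))
    (I : Ideal (MvPowerSeries (Fin n) ℂ))
    (hcodim :
      Module.rank ℂ
        ((MvPowerSeries (Fin n) ℂ ⧸ (𝔪 ^ (m + 1))) ⧸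
          (I.map (Ideal.Quotient.mk (𝔪 ^ (m + 1))))) ≤ (m : Cardinal)) :
    𝔪 ^ m ≤ I := by
  have hfg : 𝔪.FG := h𝔪 ▸ Submodule.fg_span (Set.finite_range _)
  have hjac : 𝔪 ≤ Ideal.jacobson ⊥ := by
    rw [IsLocalRing.jacobson_eq_maximalIdeal ⊥ bot_ne_top, h𝔪]
    exact span_range_X_le_maximalIdeal
  have hjet : Module.rank ℂ (MvPowerSeries (Fin n) ℂ ⧸ I ⊔ 𝔪 ^ (m + 1)) ≤ m := by
    rw [sup_comm, ← (DoubleQuot.quotQuotEquivQuotSupₐ ℂ (𝔪 ^ (m + 1)) I).toLinearEquiv.rank_eq]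
    exact hcodim
  obtain ⟨k, hkm, hk⟩ := Ideal.exists_sup_pow_succ_eq_of_rank_quotient_le (K := ℂ) I 𝔪 hjet
  exact (Ideal.pow_le_pow_right hkm).trans (Ideal.pow_le_of_sup_pow_succ_eq hfg hjac hk)
end

section
/- Let I be an ideal of C[[x₁,...,xₙ]] and m ∈ ℕ. Then dim_ℂ C[[x]]/I > m if and only if dim_ℂ C_m[[x]]/jₘ(I) > m, where C_m[[x]] = C[[x]]/m^(m+1) is the ring of m-jets and jₘ is the natural projection. -/
/-!
Write `J = 𝔪^(m+1) + I`. One direction holds because `ℂ[[x]]/J` is a quotient of `ℂ[[x]]/I`.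
Conversely, if `dim ℂ[[x]]/J ≤ m`, the chain `I + 𝔪^k` (`k = 0, …, m+1`) of ideals containing `J`
cannot drop at every step, so `I + 𝔪^k = I + 𝔪^(k+1)` for some `k ≤ m`. As `𝔪` is finitely
generated and lies in the Jacobson radical, Nakayama's lemma gives `𝔪^k ≤ I`, hence `J = I`.
-/

open MvPowerSeries

theorem Submodule.exists_eq_succ_of_antitone_of_finrank_le {K V : Type*} [DivisionRing K]
    [AddCommGroup V] [Module K V] [FiniteDimensional K V] {N : ℕ → Submodule K V}
    (hN : Antitone N) {m : ℕ} (hm : Module.finrank K V ≤ m) : ∃ k ≤ m, N k = N (k + 1) := by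
  by_contra! hne
  have hdrop : ∀ k ≤ m + 1, k + Module.finrank K (N k) ≤ Module.finrank K V := by
    intro k hk
    induction k with
    | zero => simpa using Submodule.finrank_le (N 0)
    | succ k ih =>
      have hlt : N (k + 1) < N k := (hN k.le_succ).lt_of_ne (hne k (by omega)).symm
      have := Submodule.finrank_lt_finrank_of_lt hlt
      have := ih (by omega)
      omega
  have := hdrop (m + 1) le_rfl
  omega

theorem Ideal.rank_quotient_le_of_le {K A : Type*} [CommRing K] [CommRing A] [Algebra K A]
    {I J : Ideal A} (h : I ≤ J) : Module.rank K (A ⧸ J) ≤ Module.rank K (A ⧸ I) :=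
  (Ideal.Quotient.factorₐ K h).toLinearMap.rank_le_of_surjective
    (Ideal.Quotient.factor_surjective h)

theorem Ideal.rank_quotient_map_mk {K A : Type*} [CommRing K] [CommRing A] [Algebra K A]
    (I J : Ideal A) :
    Module.rank K ((A ⧸ I) ⧸ J.map (Ideal.Quotient.mk I)) = Module.rank K (A ⧸ I ⊔ J) :=
  (DoubleQuot.quotQuotEquivQuotSupₐ K I J).toLinearEquiv.rank_eq

theorem Ideal.exists_sup_pow_eq_sup_pow_succ {K A : Type*} [Field K] [CommRing A] [Algebra K A]
    (I 𝔪 : Ideal A) {m : ℕ} (h : Module.rank K (A ⧸ (𝔪 ^ (m + 1) ⊔ I)) ≤ m) :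
    ∃ k ≤ m, I ⊔ 𝔪 ^ k = I ⊔ 𝔪 ^ (k + 1) := by
  set J := 𝔪 ^ (m + 1) ⊔ I
  have : FiniteDimensional K (A ⧸ J) :=
    Module.rank_lt_aleph0_iff.mp (h.trans_lt (Cardinal.natCast_lt_aleph0))
  let N : ℕ → Submodule K (A ⧸ J) := fun k =>
    ((I ⊔ 𝔪 ^ k).map (Ideal.Quotient.mk J)).restrictScalars K
  have hN : Antitone N := fun k l hkl =>
    Ideal.map_mono (sup_le_sup_left (Ideal.pow_le_pow_right hkl) I)
  obtain ⟨k, hk, heq⟩ :=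
    Submodule.exists_eq_succ_of_antitone_of_finrank_le hN (Module.finrank_le_of_rank_le h)
  have hJ : ∀ l ≤ m + 1, J ≤ I ⊔ 𝔪 ^ l := fun l hl =>
    sup_le (le_sup_of_le_right (Ideal.pow_le_pow_right hl)) le_sup_left
  refine ⟨k, hk, ?_⟩
  have := congrArg (Ideal.comap (Ideal.Quotient.mk J))
    (Submodule.restrictScalars_injective K _ _ heq)
  simpa only [Ideal.comap_map_of_surjective' _ Ideal.Quotient.mk_surjective, Ideal.mk_ker,
    sup_eq_left.mpr (hJ k (by omega)), sup_eq_left.mpr (hJ (k + 1) (by omega))] using this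

theorem Ideal.pow_le_of_sup_pow_eq_sup_pow_succ {A : Type*} [CommRing A] {I 𝔪 : Ideal A}
    (hfg : 𝔪.FG) (hjac : 𝔪 ≤ (⊥ : Ideal A).jacobson) {k : ℕ} (h : I ⊔ 𝔪 ^ k = I ⊔ 𝔪 ^ (k + 1)) :
    𝔪 ^ k ≤ I :=
  Submodule.le_of_le_smul_of_le_jacobson_bot hfg.pow hjac <| by
    rw [smul_eq_mul, ← pow_succ', ← h]
    exact le_sup_right

theorem MvPowerSeries.span_range_X_le_jacobson_bot {σ R : Type*} [CommRing R] :
    Ideal.span (Set.range (X : σ → MvPowerSeries σ R)) ≤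
      (⊥ : Ideal (MvPowerSeries σ R)).jacobson := by
  rw [Ideal.span_le]
  rintro _ ⟨i, rfl⟩
  rw [SetLike.mem_coe, Ideal.mem_jacobson_bot]
  intro g
  simp [isUnit_iff_constantCoeff]

set_option synthInstance.maxHeartbeats 1000000 in
/-- `dim_ℂ ℂ[[x]]/I > m` iff `dim_ℂ C_m[[x]]/jₘ(I) > m`, where `C_m[[x]] = ℂ[[x]]/𝔪^(m+1)`
is the ring of `m`-jets and `jₘ` the natural projection. -/
theorem rank_quotient_gt_iff_jet_rank_gt (n m : ℕ)
    (𝔪 : Ideal (MvPowerSeries (Fin n) ℂ))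
    (h𝔪 : 𝔪 = Ideal.span (Set.range (X : Fin n → MvPowerSeries (Fin n) ℂ)))
    (I : Ideal (MvPowerSeries (Fin n) ℂ)) :
    (m : Cardinal) < Module.rank ℂ (MvPowerSeries (Fin n) ℂ ⧸ I) ↔
      (m : Cardinal) <
        Module.rank ℂ
          ((MvPowerSeries (Fin n) ℂ ⧸ (𝔪 ^ (m + 1))) ⧸
            (I.map (Ideal.Quotient.mk (𝔪 ^ (m + 1))))) := by
  rw [Ideal.rank_quotient_map_mk]
  refine ⟨fun hI => ?_, fun hJ => hJ.trans_le (Ideal.rank_quotient_le_of_le le_sup_right)⟩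
  by_contra! hJ
  obtain ⟨k, hk, hstable⟩ := Ideal.exists_sup_pow_eq_sup_pow_succ I 𝔪 hJ
  have hfg : 𝔪.FG := h𝔪 ▸ Submodule.fg_span (Set.finite_range _)
  have hpow : 𝔪 ^ (m + 1) ≤ I := (Ideal.pow_le_pow_right (by omega)).trans <|
    Ideal.pow_le_of_sup_pow_eq_sup_pow_succ hfg (h𝔪 ▸ span_range_X_le_jacobson_bot) hstable
  rw [sup_eq_right.mpr hpow] at hJ
  exact hJ.not_gt hI
end

section
/- For any monomial y = x_{i₁}⋯x_{iₘ} of degree m in C_m[[x]] = C[[x]]/m^(m+1), if the m+1 partial products y_j = x_{i₁}⋯x_{i_j} (j = 0,...,m, with y₀ = 1) are linearly dependent modulo an ideal J of C_m[[x]], then y ∈ J. -/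
/-!
Let `k` be the least index with `c k ≠ 0`. Multiplying the relation `∑ c j • y j ∈ J` by the
tail `x_{i_{k+1}} ⋯ x_{i_m}` sends `y k` to the full monomial `y m` and every `y j` with `j > k`
to a product of more than `m` variables, which vanishes modulo `𝔪 ^ (m + 1)`. Hence
`c k • y m ∈ J`.
-/

open MvPowerSeries Finset

namespace PartialProducts

variable {A : Type*} [CommRing A] {m : ℕ} (x : Fin m → A)

def partialProd (j : ℕ) : A := ∏ l ∈ univ.filter (fun l : Fin m => (l : ℕ) < j), x l

def tailProd (k : ℕ) : A := ∏ l ∈ univ.filter (fun l : Fin m => k ≤ (l : ℕ)), x l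

lemma partialProd_of_le {j : ℕ} (hj : m ≤ j) : partialProd x j = ∏ l, x l := by
  rw [partialProd, filter_true_of_mem fun l _ => l.isLt.trans_le hj]

lemma tailProd_mul_partialProd {k j : ℕ} (hkj : k ≤ j) :
    tailProd x k * partialProd x j =
      (∏ l, x l) * ∏ l ∈ univ.filter (fun l : Fin m => k ≤ (l : ℕ) ∧ (l : ℕ) < j), x l := by
  rw [tailProd, partialProd, ← prod_union_inter, ← filter_or, ← filter_and,
    filter_true_of_mem fun l _ => by omega]

lemma tailProd_mul_partialProd_self (k : ℕ) : tailProd x k * partialProd x k = ∏ l, x l := by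
  rw [tailProd_mul_partialProd x le_rfl, filter_false_of_mem fun l _ => by omega, prod_empty,
    mul_one]

lemma tailProd_mul_partialProd_eq_zero (hx : ∀ l, x l * ∏ l, x l = 0) {k j : ℕ} (hkj : k < j)
    (hj : j ≤ m) : tailProd x k * partialProd x j = 0 := by
  have hk : k < m := hkj.trans_le hj
  rw [tailProd_mul_partialProd x hkj.le, ← zero_dvd_iff, ← hx ⟨k, hk⟩, mul_comm]
  exact mul_dvd_mul_left _ (dvd_prod_of_mem _ (by simpa using hkj))

theorem prod_mem_of_sum_smul_partialProd_mem {K : Type*} [Field K] [Algebra K A]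
    (hx : ∀ l, x l * ∏ l, x l = 0) (J : Ideal A) {c : Fin (m + 1) → K} (hc : c ≠ 0)
    (hJ : ∑ j, c j • partialProd x j ∈ J) : ∏ l, x l ∈ J := by
  obtain ⟨k, hk⟩ := exists_minimal_of_wellFoundedLT (fun j => c j ≠ 0) (Function.ne_iff.mp hc)
  obtain ⟨hck, hmin⟩ := minimal_iff_forall_lt.mp hk
  have hkill : tailProd x k * ∑ j, c j • partialProd x j = c k • ∏ l, x l := by
    rw [mul_sum, sum_eq_single k, mul_smul_comm, tailProd_mul_partialProd_self]
    · intro j _ hjk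
      rcases hjk.lt_or_gt with hjk | hkj
      · rw [not_not.mp (hmin hjk), zero_smul, mul_zero]
      · rw [mul_smul_comm, tailProd_mul_partialProd_eq_zero x hx hkj (Nat.lt_succ_iff.mp j.isLt),
          smul_zero]
    · exact fun hk_notMem => (hk_notMem (mem_univ k)).elim
  have hmem := J.smul_of_tower_mem (c k)⁻¹ (hkill ▸ J.mul_mem_left (tailProd x k) hJ)
  rwa [smul_smul, inv_mul_cancel₀ hck, one_smul] at hmem

end PartialProducts

open PartialProducts

lemma MvPowerSeries.X_mul_prod_X_mem_pow {σ R : Type*} [CommRing R] {m : ℕ}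
    {𝔪 : Ideal (MvPowerSeries σ R)} (hX : ∀ s, X s ∈ 𝔪) (i : Fin m → σ) (t : σ) :
    X t * ∏ l, X (i l) ∈ 𝔪 ^ (m + 1) := by
  rw [← Fin.prod_cons, ← card_fin (m + 1), ← prod_const]
  exact Ideal.prod_mem_prod fun l _ => Fin.cases (hX t) (fun l => hX (i l)) l

/-- For a monomial `y = x_{i₁}⋯x_{iₘ}` of degree `m` in `C_m[[x]] = ℂ[[x]]/𝔪^(m+1)`,
if the `m+1` partial products `y_j = x_{i₁}⋯x_{i_j}` (with `y₀ = 1`) are linearly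
dependent modulo an ideal `J`, then `y ∈ J`. -/
theorem monomial_mem_of_partial_products_linearDependent (n m : ℕ)
    (𝔪 : Ideal (MvPowerSeries (Fin n) ℂ))
    (h𝔪 : 𝔪 = Ideal.span (Set.range (X : Fin n → MvPowerSeries (Fin n) ℂ)))
    (i : Fin m → Fin n)
    (J : Ideal (MvPowerSeries (Fin n) ℂ ⧸ (𝔪 ^ (m + 1))))
    (y : Fin (m + 1) → MvPowerSeries (Fin n) ℂ ⧸ (𝔪 ^ (m + 1)))
    (hy : ∀ j : Fin (m + 1), y j =
      Ideal.Quotient.mk (𝔪 ^ (m + 1))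
        (∏ l ∈ Finset.univ.filter (fun l : Fin m => (l : ℕ) < (j : ℕ)), X (i l)))
    (c : Fin (m + 1) → ℂ) (hc : c ≠ 0)
    (hdep : (∑ j, c j • y j) ∈ J) :
    y (Fin.last m) ∈ J := by
  set x : Fin m → _ := fun l => Ideal.Quotient.mk (𝔪 ^ (m + 1)) (X (i l))
  have hyx : ∀ j : Fin (m + 1), y j = partialProd x j := fun j => by
    rw [hy, map_prod, partialProd]
  have hX : ∀ t, X t ∈ 𝔪 := fun t => h𝔪 ▸ Ideal.subset_span ⟨t, rfl⟩
  have hx : ∀ t, x t * ∏ l, x l = 0 := fun t => by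
    rw [← map_prod, ← map_mul, Ideal.Quotient.eq_zero_iff_mem]
    exact X_mul_prod_X_mem_pow hX i (i t)
  simp only [hyx] at hdep ⊢
  rw [Fin.val_last, partialProd_of_le x le_rfl]
  exact prod_mem_of_sum_smul_partialProd_mem x hx J hc hdep
end

section
/- Let A be an n×n complex matrix with eigenvalues λ₁,...,λₙ, all nonzero. Then every entry of A^t for t ∈ ℤ, viewed as a function of t, lies in the ℂ-algebra generated by the functions t ↦ λᵢ^t (i = 1,...,n) and t ↦ t. -/
/-!
Write `E` for the shift `f ↦ f (· + 1)` on sequences `ℤ → K`. Since `A^(t+1) = A * A^t`, the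
operator `p(E)` sends `t ↦ (A^t) j k` to `t ↦ (p(A) * A^t) j k`, so by Cayley–Hamilton
`∏ᵢ (E - λᵢ)` kills every entry sequence. It remains to see that the algebra `S` generated by
`t` and the `λᵢ^t` is closed under solving `(E - l) f ∈ S`: the solutions of `(E - l) f = 0` are
the multiples of `l^t`, and `S` is spanned by the `t^m μ^t`, each of which lies in `(E - l) S`
by induction on `m` because `(E - l)` acts on them triangularly with diagonal `μ - l`.
-/

open Polynomial

section Shift

variable (R : Type*) [CommSemiring R]

def intShift : Module.End R (ℤ → R) :=
  LinearMap.funLeft R R (· + 1)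

variable {R}

@[simp]
lemma intShift_apply (f : ℤ → R) (t : ℤ) : intShift R f t = f (t + 1) := rfl

lemma intShift_pow_apply (m : ℕ) (f : ℤ → R) (t : ℤ) : (intShift R ^ m) f t = f (t + m) := by
  induction m generalizing f with
  | zero => simp
  | succ m ih =>
    rw [pow_succ, Module.End.mul_apply, ih, intShift_apply]
    push_cast
    ring_nf

end Shift

lemma aeval_intShift_zpow_apply {n R : Type*} [Fintype n] [DecidableEq n] [CommRing R]
    {A : Matrix n n R} (hA : IsUnit A.det) (p : R[X]) (j k : n) :
    aeval (intShift R) p (fun t => (A ^ t) j k) = fun t => (aeval A p * A ^ t) j k := by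
  induction p using Polynomial.induction_on' with
  | add p q hp hq =>
    funext t
    simp only [map_add, LinearMap.add_apply, hp, hq, Matrix.add_mul, Matrix.add_apply, Pi.add_apply]
  | monomial m a =>
    funext t
    rw [aeval_monomial, aeval_monomial, Module.End.mul_apply, Module.algebraMap_end_apply,
      Pi.smul_apply, intShift_pow_apply, add_comm, Matrix.zpow_add hA, zpow_natCast,
      Algebra.algebraMap_eq_smul_one, Matrix.smul_mul, one_mul, Matrix.smul_mul,
      Matrix.smul_apply]

section Recurrence

variable {K : Type*} [Field K]

lemma eq_smul_zpow_of_intShift_sub_eq_zero {l : K} (hl : l ≠ 0) {u : ℤ → K}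
    (hu : (intShift K - algebraMap K _ l) u = 0) : u = u 0 • fun t => l ^ t := by
  have step (t : ℤ) : u (t + 1) = l * u t := by
    have := congrFun hu t
    simp only [LinearMap.sub_apply, Module.algebraMap_end_apply, Pi.sub_apply, intShift_apply,
      Pi.smul_apply, smul_eq_mul, Pi.zero_apply] at this
    exact sub_eq_zero.mp this
  funext t
  induction t using Int.induction_on with
  | zero => simp
  | succ t ih =>
    rw [step, ih, Pi.smul_apply, Pi.smul_apply, smul_eq_mul, smul_eq_mul, zpow_add_one₀ hl]
    ring
  | pred t ih =>
    have h := step (-t - 1)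
    rw [sub_add_cancel, ih] at h
    rw [Pi.smul_apply, smul_eq_mul] at h ih ⊢
    rw [zpow_sub_one₀ hl, eq_inv_mul_iff_mul_eq₀ hl |>.mpr h.symm]
    ring


lemma mem_of_intShift_sub_mem {S : Submodule K (ℤ → K)} {l : K} (hl : l ≠ 0)
    (hlS : (fun t => l ^ t) ∈ S) (hS : S ≤ S.map (intShift K - algebraMap K _ l)) {f : ℤ → K}
    (hf : (intShift K - algebraMap K _ l) f ∈ S) : f ∈ S := by
  obtain ⟨h, hS, hh⟩ := hS hf
  have hker : (intShift K - algebraMap K _ l) (f - h) = 0 := by rw [map_sub, hh, sub_self]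
  rw [← sub_add_cancel f h, eq_smul_zpow_of_intShift_sub_eq_zero hl hker]
  exact add_mem (S.smul_mem _ hlS) hS

lemma mem_of_aeval_intShift_prod_mem {ι : Type*} {S : Submodule K (ℤ → K)} {lam : ι → K}
    (s : Finset ι) (hlam : ∀ i ∈ s, lam i ≠ 0) (hlamS : ∀ i ∈ s, (fun t => lam i ^ t) ∈ S)
    (hS : ∀ i ∈ s, S ≤ S.map (intShift K - algebraMap K _ (lam i))) {f : ℤ → K}
    (hf : aeval (intShift K) (∏ i ∈ s, (X - C (lam i))) f ∈ S) : f ∈ S := by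
  induction s using Finset.cons_induction with
  | empty => simpa using hf
  | cons i s hi ih =>
    simp only [Finset.forall_mem_cons] at hlam hlamS hS
    rw [Finset.prod_cons, map_mul, Module.End.mul_apply, map_sub, aeval_X, aeval_C] at hf
    exact ih hlam.2 hlamS.2 hS.2 (mem_of_intShift_sub_mem hlam.1 hlamS.1 hS.1 hf)

def expMonomial (m : ℕ) (μ : K) : ℤ → K := fun t => (t : K) ^ m * μ ^ t

lemma expMonomial_mul (m m' : ℕ) (μ μ' : K) :
    expMonomial m μ * expMonomial m' μ' = expMonomial (m + m') (μ * μ') := by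
  funext t
  simp only [expMonomial, Pi.mul_apply, pow_add, mul_zpow]
  ring

lemma expMonomial_mem {S : Subalgebra K (ℤ → K)} (hS : (fun t : ℤ => (t : K)) ∈ S) {μ : K}
    (hμS : (fun t : ℤ => μ ^ t) ∈ S) (m : ℕ) : expMonomial m μ ∈ S :=
  mul_mem (pow_mem hS m) hμS

lemma intShift_sub_expMonomial (m : ℕ) {μ : K} (hμ : μ ≠ 0) (l : K) :
    (intShift K - algebraMap K _ l) (expMonomial m μ) =
      (μ - l) • expMonomial m μ + μ • ∑ k ∈ Finset.range m, (m.choose k : K) • expMonomial k μ := by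
  funext t
  simp only [expMonomial, LinearMap.sub_apply, Module.algebraMap_end_apply, Pi.sub_apply,
    intShift_apply, Pi.smul_apply, Pi.add_apply, Finset.sum_apply, smul_eq_mul]
  push_cast
  rw [zpow_add_one₀ hμ, add_pow, Finset.sum_range_succ, Finset.mul_sum, add_mul, Finset.sum_mul,
    Finset.sum_congr rfl fun k _ => show (t : K) ^ k * 1 ^ (m - k) * m.choose k * (μ ^ t * μ) =
      μ * (m.choose k * ((t : K) ^ k * μ ^ t)) by ring]
  simp only [one_pow, Nat.choose_self, Nat.cast_one]
  ring


lemma expMonomial_mem_map_intShift_sub [CharZero K] {S : Subalgebra K (ℤ → K)}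
    (hS : (fun t : ℤ => (t : K)) ∈ S) {μ : K} (hμ : μ ≠ 0) (hμS : (fun t : ℤ => μ ^ t) ∈ S)
    (l : K) (m : ℕ) :
    expMonomial m μ ∈ (Subalgebra.toSubmodule S).map (intShift K - algebraMap K _ l) := by
  set T := (Subalgebra.toSubmodule S).map (intShift K - algebraMap K _ l)
  have hD (j : ℕ) : (intShift K - algebraMap K _ l) (expMonomial j μ) ∈ T :=
    Submodule.mem_map_of_mem (expMonomial_mem hS hμS j)
  induction m using Nat.strong_induction_on with
  | _ m ih =>
  have hlower (c : ℕ → K) : ∑ k ∈ Finset.range m, c k • expMonomial k μ ∈ T :=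
    T.sum_mem fun k hk => T.smul_mem _ (ih k (Finset.mem_range.mp hk))
  obtain rfl | hμl := eq_or_ne μ l
  -- resonant case: the diagonal entry vanishes, so `t^m μ^t` comes from `(E - μ) (t^(m+1) μ^t)`
  · have h := T.sub_mem (hD (m + 1)) (T.smul_mem μ (hlower fun k => ((m + 1).choose k : K)))
    rw [intShift_sub_expMonomial (m + 1) hμ, sub_self, zero_smul, zero_add,
      Finset.sum_range_succ, Nat.choose_succ_self_right, smul_add, add_sub_cancel_left,
      smul_smul] at h
    exact (T.smul_mem_iff (mul_ne_zero hμ (Nat.cast_ne_zero.mpr m.succ_ne_zero))).mp h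
  · have h := T.sub_mem (hD m) (T.smul_mem μ (hlower fun k => (m.choose k : K)))
    rw [intShift_sub_expMonomial m hμ, add_sub_cancel_right] at h
    exact (T.smul_mem_iff (sub_ne_zero.mpr hμl)).mp h

end Recurrence

section ExpPolyAlgebra

variable {K ι : Type*} [Field K]

def expPolyAlgebra (lam : ι → K) : Subalgebra K (ℤ → K) :=
  Algebra.adjoin K (Set.range (fun i (t : ℤ) => lam i ^ t) ∪ {fun t : ℤ => (t : K)})

lemma zpow_mem_expPolyAlgebra (lam : ι → K) (i : ι) :
    (fun t : ℤ => lam i ^ t) ∈ expPolyAlgebra lam :=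
  Algebra.subset_adjoin (Or.inl ⟨i, rfl⟩)

lemma intCast_mem_expPolyAlgebra (lam : ι → K) : (fun t : ℤ => (t : K)) ∈ expPolyAlgebra lam :=
  Algebra.subset_adjoin (Or.inr rfl)

lemma exists_expMonomial_of_mem_closure {lam : ι → K} (hlam : ∀ i, lam i ≠ 0) {u : ℤ → K}
    (hu : u ∈ Submonoid.closure
      (Set.range (fun i (t : ℤ) => lam i ^ t) ∪ {fun t : ℤ => (t : K)})) :
    ∃ m μ, μ ≠ 0 ∧ (fun t : ℤ => μ ^ t) ∈ expPolyAlgebra lam ∧ u = expMonomial m μ := by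
  have hone : (fun t : ℤ => (1 : K) ^ t) ∈ expPolyAlgebra lam := by
    simpa [Pi.one_def] using one_mem (expPolyAlgebra lam)
  induction hu using Submonoid.closure_induction with
  | mem u hu =>
    rcases hu with ⟨i, rfl⟩ | rfl
    · exact ⟨0, lam i, hlam i, zpow_mem_expPolyAlgebra lam i, by funext t; simp [expMonomial]⟩
    · exact ⟨1, 1, one_ne_zero, hone, by funext t; simp [expMonomial]⟩
  | one => exact ⟨0, 1, one_ne_zero, hone, by funext t; simp [expMonomial]⟩
  | mul u v _ _ hu hv =>
    obtain ⟨m, μ, hμ, hμS, rfl⟩ := hu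
    obtain ⟨m', μ', hμ', hμ'S, rfl⟩ := hv
    refine ⟨m + m', μ * μ', mul_ne_zero hμ hμ', ?_, expMonomial_mul ..⟩
    simpa only [Pi.mul_def, mul_zpow] using mul_mem hμS hμ'S

lemma expPolyAlgebra_le_map_intShift_sub [CharZero K] {lam : ι → K} (hlam : ∀ i, lam i ≠ 0)
    (l : K) : Subalgebra.toSubmodule (expPolyAlgebra lam) ≤
      (Subalgebra.toSubmodule (expPolyAlgebra lam)).map (intShift K - algebraMap K _ l) := by
  conv_lhs => rw [expPolyAlgebra, Algebra.adjoin_eq_span]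
  refine Submodule.span_le.mpr fun u hu => ?_
  obtain ⟨m, μ, hμ, hμS, rfl⟩ := exists_expMonomial_of_mem_closure hlam hu
  exact expMonomial_mem_map_intShift_sub (intCast_mem_expPolyAlgebra lam) hμ hμS l m

end ExpPolyAlgebra

/-- Every entry of `A^t` (`t ∈ ℤ`) of an invertible `n×n` complex matrix `A` with
(nonzero) eigenvalues `λ₁,…,λₙ`, as a function of `t ∈ ℤ`, lies in the ℂ-algebra
generated by the functions `t ↦ λᵢ^t` and `t ↦ t`. -/
theorem matrix_zpow_entries_mem_adjoin (n : ℕ) (A : Matrix (Fin n) (Fin n) ℂ)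
    (hA : IsUnit A.det) (lam : Fin n → ℂ) (hlam : ∀ i, lam i ≠ 0)
    (hchar : A.charpoly = ∏ i, (Polynomial.X - Polynomial.C (lam i))) :
    ∀ j k : Fin n,
      (fun t : ℤ => (A ^ t) j k) ∈
        Algebra.adjoin ℂ
          ((Set.range fun i : Fin n => fun t : ℤ => lam i ^ t) ∪
            {fun t : ℤ => (t : ℂ)}) := by
  intro j k
  have hzero : aeval (intShift ℂ) (∏ i, (X - C (lam i))) (fun t => (A ^ t) j k) = 0 := by
    rw [aeval_intShift_zpow_apply hA, ← hchar, Matrix.aeval_self_charpoly]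
    funext t
    simp
  exact mem_of_aeval_intShift_prod_mem (S := Subalgebra.toSubmodule (expPolyAlgebra lam))
    Finset.univ (fun i _ => hlam i) (fun i _ => zpow_mem_expPolyAlgebra lam i)
    (fun i _ => expPolyAlgebra_le_map_intShift_sub hlam (lam i)) (hzero ▸ zero_mem _)
end

section
/- Let V be a derivation of C[[x₁,...,xₙ]] preserving the maximal ideal with linear part having eigenvalues λ₁,...,λₙ. Then for every p, the spectrum of the induced operator j^p V on C_p[[x]] is contained in the additive semigroup {Σᵢ αᵢλᵢ : α ∈ ℕⁿ, 1 ≤ |α| ≤ p} generated by λ₁,...,λₙ. -/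
/-!
Let `f ∈ 𝔪 \ 𝔪^(p+1)` with `V f ≡ μ f mod 𝔪^(p+1)`. Since `𝔪^j` consists exactly of the series
of order at least `j`, `f` has some order `k` with `1 ≤ k ≤ p`. Modulo `𝔪^(k+1)`, `V` acts on forms
of degree `k` through its linear part `D = ∑ L i j X_j ∂_i`, so the leading form `q` of `f`
satisfies `D q = μ q`.

A product of generalized eigenvectors of a derivation is a generalized eigenvector for the sum of
the eigenvalues. The linear forms are spanned by generalized eigenvectors of `D` with eigenvalues
among the `λ_i` (`D` acts on them as `Lᵀ`), so the forms of degree `k` are spanned by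
generalized eigenvectors with eigenvalues `∑ α_i λ_i`, `|α| = k`. Generalized eigenspaces are
independent, so `μ` is one of these values.
-/

open MvPowerSeries
open Module Matrix TensorProduct

namespace Derivation

section CommSemiring

variable {R A : Type*} [CommSemiring R] [CommSemiring A] [Algebra R A]

theorem mapsTo_pow (D : Derivation R A A) {M : Submodule R A} (hM : ∀ x ∈ M, D x ∈ M) :
    ∀ k : ℕ, ∀ x ∈ M ^ k, D x ∈ M ^ k
  | 0, x, hx => by
    obtain ⟨r, rfl⟩ := Submodule.mem_one.mp hx
    simp
  | k + 1, x, hx => by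
    rw [pow_succ] at hx ⊢
    refine Submodule.mul_induction_on hx (fun a ha b hb => ?_) (fun a b ha hb => ?_)
    · rw [leibniz, smul_eq_mul, smul_eq_mul, mul_comm b]
      exact add_mem (Submodule.mul_mem_mul ha (hM b hb))
        (Submodule.mul_mem_mul (mapsTo_pow D hM k a ha) hb)
    · rw [map_add]
      exact add_mem ha hb

theorem mapsTo_ideal_pow (D : Derivation R A A) {I : Ideal A} (hI : ∀ x ∈ I, D x ∈ I)
    (k : ℕ) : ∀ x ∈ I ^ k, D x ∈ I ^ k := by
  rcases eq_or_ne k 0 with rfl | hk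
  · simp
  · have := D.mapsTo_pow (M := I.restrictScalars R) hI k
    rwa [← Submodule.restrictScalars_pow hk] at this

end CommSemiring

variable {R A : Type*} [CommRing R] [CommRing A] [Algebra R A]

/-- On `A ⊗ A`, the operator `(D - a) ⊗ 1 + 1 ⊗ (D - b)` lifts `D - (a + b)` through
multiplication and is a sum of two commuting operators, so the binomial theorem applies. -/
theorem mul_mem_maxGenEigenspace (D : Derivation R A A) {a b : R} {x y : A}
    (hx : x ∈ Module.End.maxGenEigenspace (D : Module.End R A) a)
    (hy : y ∈ Module.End.maxGenEigenspace (D : Module.End R A) b) :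
    x * y ∈ Module.End.maxGenEigenspace (D : Module.End R A) (a + b) := by
  obtain ⟨k₁, h₁⟩ := (Module.End.mem_maxGenEigenspace _ _ _).mp hx
  obtain ⟨k₂, h₂⟩ := (Module.End.mem_maxGenEigenspace _ _ _).mp hy
  let f₁ : Module.End R (A ⊗[R] A) := ((D : Module.End R A) - a • 1).rTensor A
  let f₂ : Module.End R (A ⊗[R] A) := ((D : Module.End R A) - b • 1).lTensor A
  have hlift : ((D : Module.End R A) - (a + b) • 1) ∘ₗ LinearMap.mul' R A =
      LinearMap.mul' R A ∘ₗ (f₁ + f₂) := by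
    ext u v
    simp [f₁, f₂, leibniz, Algebra.smul_def]
    ring
  have hcomm : Commute f₁ f₂ := by
    ext u v
    simp only [f₁, f₂, AlgebraTensorModule.curry_apply, curry_apply,
      LinearMap.coe_restrictScalars, Module.End.mul_apply, LinearMap.rTensor_tmul,
      LinearMap.lTensor_tmul]
  have hvanish : ((f₁ + f₂) ^ (k₁ + k₂)) (x ⊗ₜ y) = 0 := by
    rw [hcomm.add_pow', LinearMap.coe_sum, Finset.sum_apply]
    refine Finset.sum_eq_zero fun ⟨i, j⟩ hij => ?_
    rw [Finset.HasAntidiagonal.mem_antidiagonal] at hij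
    dsimp only at hij ⊢
    rw [LinearMap.smul_apply, Module.End.mul_apply, LinearMap.lTensor_pow, LinearMap.rTensor_pow,
      LinearMap.lTensor_tmul, LinearMap.rTensor_tmul]
    rcases le_or_gt k₁ i with h | h
    · rw [Module.End.pow_map_zero_of_le h h₁, zero_tmul, smul_zero]
    · rw [Module.End.pow_map_zero_of_le (by omega) h₂, tmul_zero, smul_zero]
  refine (Module.End.mem_maxGenEigenspace _ _ _).mpr ⟨k₁ + k₂, ?_⟩
  rw [← LinearMap.mul'_apply (R := R), ← LinearMap.comp_apply,
    Module.End.commute_pow_left_of_commute hlift, LinearMap.comp_apply, hvanish, map_zero]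

end Derivation

namespace Module.End

variable {R M N : Type*} [CommRing R] [AddCommGroup M] [Module R M] [AddCommGroup N] [Module R N]

theorem map_maxGenEigenspace_le_of_comp_eq {f : End R M} {g : End R N} {φ : M →ₗ[R] N}
    (h : φ ∘ₗ f = g ∘ₗ φ) (μ : R) :
    (f.maxGenEigenspace μ).map φ ≤ g.maxGenEigenspace μ := by
  rintro _ ⟨x, hx, rfl⟩
  obtain ⟨k, hk⟩ := (mem_maxGenEigenspace _ _ _).mp hx
  have hsub : (g - μ • 1) ∘ₗ φ = φ ∘ₗ (f - μ • 1) := by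
    rw [LinearMap.sub_comp, LinearMap.comp_sub, ← h]
    ext; simp
  refine (mem_maxGenEigenspace _ _ _).mpr ⟨k, ?_⟩
  rw [← LinearMap.comp_apply, commute_pow_left_of_commute hsub, LinearMap.comp_apply, hk,
    map_zero]

end Module.End

namespace Matrix

variable {σ K : Type*} [Fintype σ] [DecidableEq σ] [Field K]

theorem exists_eq_of_maxGenEigenspace_toLin'_ne_bot {A : Matrix σ σ K} {lam : σ → K}
    (hchar : A.charpoly = ∏ i, (Polynomial.X - Polynomial.C (lam i))) {μ : K}
    (hμ : End.maxGenEigenspace A.toLin' μ ≠ ⊥) : ∃ i, lam i = μ := by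
  have hroot :=
    (End.hasEigenvalue_iff_isRoot_charpoly _ μ).mp (End.HasUnifEigenvalue.lt one_pos hμ)
  rw [Matrix.charpoly_toLin', hchar, Polynomial.IsRoot, Polynomial.eval_prod,
    Finset.prod_eq_zero_iff] at hroot
  obtain ⟨i, -, hi⟩ := hroot
  exact ⟨i, (sub_eq_zero.mp (by simpa using hi)).symm⟩

theorem iSup_maxGenEigenspace_toLin'_eq_top [IsAlgClosed K] {A : Matrix σ σ K} {lam : σ → K}
    (hchar : A.charpoly = ∏ i, (Polynomial.X - Polynomial.C (lam i))) :
    ⨆ i, End.maxGenEigenspace A.toLin' (lam i) = ⊤ := by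
  refine eq_top_iff.mpr ((End.iSup_maxGenEigenspace_eq_top A.toLin').ge.trans
    (iSup_le fun μ => ?_))
  by_cases hμ : End.maxGenEigenspace A.toLin' μ = ⊥
  · simp [hμ]
  · obtain ⟨i, rfl⟩ := exists_eq_of_maxGenEigenspace_toLin'_ne_bot hchar hμ
    exact le_iSup (fun i => End.maxGenEigenspace A.toLin' (lam i)) i

end Matrix

namespace MvPowerSeries

open Finsupp

section CommRing

variable {σ R : Type*} [CommRing R]

theorem le_order_of_mem_span_X_pow {k : ℕ} {f : MvPowerSeries σ R}
    (hf : f ∈ Ideal.span (Set.range X) ^ k) : (k : ℕ∞) ≤ f.order := by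
  induction k generalizing f with
  | zero => simp
  | succ k ih =>
    rw [pow_succ] at hf
    refine Submodule.mul_induction_on hf (fun a ha b hb => ?_) (fun a b ha hb => ?_)
    · have hb : 1 ≤ b.order := by
        rw [one_le_order_iff_constCoeff_eq_zero, ← RingHom.mem_ker]
        refine (Ideal.span_le.mpr ?_) hb
        rintro _ ⟨i, rfl⟩
        simp
      calc ((k + 1 : ℕ) : ℕ∞) = k + 1 := by push_cast; rfl
        _ ≤ a.order + b.order := add_le_add (ih ha) hb
        _ ≤ (a * b).order := le_order_mul
    · exact (le_min ha hb).trans min_order_le_add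

end CommRing

variable {σ K : Type*} [Fintype σ] [Field K] [CharZero K]

theorem exists_eq_sum_X_mul_of_le_order {k : ℕ} {f : MvPowerSeries σ K}
    (hf : ((k + 1 : ℕ) : ℕ∞) ≤ f.order) :
    ∃ g : σ → MvPowerSeries σ K,
      f = ∑ i, X i * g i ∧ ∀ i, (k : ℕ∞) ≤ (g i).order := by
  classical
  -- Euler's identity `degree β = ∑ i, β i` spreads each coefficient of `f` over the `X i`
  let g : σ → MvPowerSeries σ K := fun i γ =>
    (γ i + 1 : K) / (degree γ + 1) * coeff (γ + single i 1) f
  have hg : ∀ i γ,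
      coeff γ (g i) = (γ i + 1 : K) / (degree γ + 1) * coeff (γ + single i 1) f :=
    fun _ _ => rfl
  refine ⟨g, ?_, fun i => le_order fun γ hγ => ?_⟩
  · ext β
    have hterm : ∀ i, coeff β (X i * g i) = (β i : K) / degree β * coeff β f := by
      intro i
      rw [X_def, coeff_monomial_mul, one_mul]
      split_ifs with h
      · have hβ : β - single i 1 + single i 1 = β := tsub_add_cancel_of_le h
        have hdeg : degree (β - single i 1) + 1 = degree β := by
          simpa using congrArg degree hβ
        have hi : (β - single i 1 : σ →₀ ℕ) i + 1 = β i := by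
          simpa using DFunLike.congr_fun hβ i
        rw [hg, hβ, ← hdeg, ← hi]
        push_cast; rfl
      · have : β i = 0 := by
          by_contra h'
          exact h (single_le_iff.mpr (Nat.one_le_iff_ne_zero.mpr h'))
        simp [this]
    rw [map_sum, Finset.sum_congr rfl fun i _ => hterm i, ← Finset.sum_mul, ← Finset.sum_div]
    rcases eq_or_ne β 0 with rfl | hβ
    · rw [coeff_of_lt_order (lt_of_lt_of_le (by simp) hf)]
      simp
    · have : ((degree β : ℕ) : K) ≠ 0 := by exact_mod_cast (degree_eq_zero_iff β).not.mpr hβ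
      rw [← Nat.cast_sum, ← degree_eq_sum, div_self this, one_mul]
  · have : degree (γ + single i 1) < k + 1 := by simp at hγ ⊢; omega
    rw [hg, coeff_of_lt_order (lt_of_lt_of_le (by exact_mod_cast this) hf), mul_zero]

theorem mem_span_X_pow_of_le_order {k : ℕ} {f : MvPowerSeries σ K}
    (hf : (k : ℕ∞) ≤ f.order) :
    f ∈ Ideal.span (Set.range X) ^ k := by
  induction k generalizing f with
  | zero => simp
  | succ k ih =>
    obtain ⟨g, rfl, hg⟩ := exists_eq_sum_X_mul_of_le_order hf
    rw [pow_succ']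
    exact Ideal.sum_mem _ fun i _ =>
      Ideal.mul_mem_mul (Ideal.subset_span ⟨i, rfl⟩) (ih (hg i))

theorem exists_order_eq_of_mem_of_notMem {f : MvPowerSeries σ K} {p : ℕ}
    (hf : f ∈ Ideal.span (Set.range X)) (hfp : f ∉ Ideal.span (Set.range X) ^ (p + 1)) :
    ∃ k : ℕ, f.order = k ∧ 1 ≤ k ∧ k ≤ p := by
  have hlt : f.order < (p + 1 : ℕ) := not_le.mp fun h => hfp (mem_span_X_pow_of_le_order h)
  have h1 : ((1 : ℕ) : ℕ∞) ≤ f.order := le_order_of_mem_span_X_pow (by rwa [pow_one])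
  obtain ⟨k, hk⟩ := ENat.ne_top_iff_exists.mp (ne_top_of_lt hlt)
  rw [← hk] at hlt h1
  exact ⟨k, hk.symm, by exact_mod_cast h1, Nat.lt_succ_iff.mp (by exact_mod_cast hlt)⟩

theorem sub_linearPart_mem_sq {g : MvPowerSeries σ K} (hg : g ∈ Ideal.span (Set.range X)) :
    g - ∑ j, coeff (single j 1) g • X j ∈ Ideal.span (Set.range X) ^ 2 := by
  classical
  have hg₀ : constantCoeff g = 0 := one_le_order_iff_constCoeff_eq_zero.mp
    (by simpa using le_order_of_mem_span_X_pow (k := 1) (f := g) (by rwa [pow_one]))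
  refine mem_span_X_pow_of_le_order (le_order fun β hβ => ?_)
  have hβ : degree β < 2 := by exact_mod_cast hβ
  rw [map_sub, map_sum]
  simp_rw [map_smul, coeff_X, smul_eq_mul, mul_ite, mul_one, mul_zero]
  rcases (by omega : degree β = 0 ∨ degree β = 1) with h | h
  · rw [(degree_eq_zero_iff β).mp h]
    simp [hg₀, eq_comm (a := (0 : σ →₀ ℕ))]
  · obtain ⟨i, rfl⟩ : ∃ i, single i 1 = β := (Set.ext_iff.mp range_single_one β).mpr h
    simp [single_left_inj]

theorem exists_isHomogeneous_sub_mem {f : MvPowerSeries σ K} {k : ℕ} (hf : f.order = k) :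
    ∃ q : MvPolynomial σ K, q.IsHomogeneous k ∧ q ≠ 0 ∧
      f - q ∈ Ideal.span (Set.range X) ^ (k + 1) := by
  have hcoe : (truncTotal (k + 1) (homogeneousComponent k f) : MvPowerSeries σ K) =
      homogeneousComponent k f := by
    ext β
    rw [MvPolynomial.coeff_coe, coeff_truncTotal_eq_ite, coeff_homogeneousComponent]
    split_ifs <;> first | rfl | omega
  refine ⟨truncTotal (k + 1) (homogeneousComponent k f), fun β hβ => ?_, fun h => ?_, ?_⟩
  · exact isHomogeneous_homogeneousComponent f k (by rwa [← hcoe, MvPolynomial.coeff_coe])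
  · exact homogeneousComponent_of_order hf.symm (by rw [← hcoe, h, MvPolynomial.coe_zero])
  · rw [hcoe]
    refine mem_span_X_pow_of_le_order (le_order fun β hβ => ?_)
    have hβ : degree β < k + 1 := by exact_mod_cast hβ
    rw [map_sub, coeff_homogeneousComponent]
    split_ifs with h
    · exact sub_self _
    · rw [sub_zero, coeff_of_lt_order (by rw [hf]; exact_mod_cast (by omega : degree β < k))]

end MvPowerSeries

namespace MvPolynomial

section CommRing

variable {σ R : Type*} [CommRing R]

theorem IsHomogeneous.eq_zero_of_coe_mem_span_X_pow {q : MvPolynomial σ R} {k : ℕ}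
    (hq : q.IsHomogeneous k)
    (h : (q : MvPowerSeries σ R) ∈ Ideal.span (Set.range MvPowerSeries.X) ^ (k + 1)) :
    q = 0 := by
  ext β
  by_cases hβ : β.degree = k
  · have hlt : (β.degree : ℕ∞) < ((k + 1 : ℕ) : ℕ∞) := by
      exact_mod_cast (by omega : β.degree < k + 1)
    rw [← coeff_coe, coeff_zero, MvPowerSeries.coeff_of_lt_order
      (hlt.trans_le (MvPowerSeries.le_order_of_mem_span_X_pow h))]
  · rw [hq.coeff_eq_zero hβ, coeff_zero]

end CommRing

variable {σ K : Type*} [Fintype σ] [Field K]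

section LinearDerivation

noncomputable def linearDerivation (L : Matrix σ σ K) :
    Derivation K (MvPolynomial σ K) (MvPolynomial σ K) :=
  mkDerivation K fun i => ∑ j, L i j • X j

theorem linearDerivation_X (L : Matrix σ σ K) (i : σ) :
    linearDerivation L (X i) = ∑ j, L i j • X j :=
  mkDerivation_X _ _ _

theorem coe_linearDerivation_X (L : Matrix σ σ K) (i : σ) :
    (linearDerivation L (X i) : MvPowerSeries σ K) = ∑ j, L i j • MvPowerSeries.X j := by
  rw [linearDerivation_X, ← coeToMvPowerSeries.ringHom_apply, map_sum]
  simp [coeToMvPowerSeries.ringHom_apply]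

theorem linearDerivation_mem_homogeneousSubmodule (L : Matrix σ σ K) {k : ℕ}
    {q : MvPolynomial σ K} (hq : q ∈ homogeneousSubmodule σ K k) :
    linearDerivation L q ∈ homogeneousSubmodule σ K k := by
  rw [← homogeneousSubmodule_one_pow] at hq ⊢
  refine (linearDerivation L).mapsTo_pow (fun x hx => ?_) k q hq
  rw [homogeneousSubmodule_one_eq_span_X] at hx ⊢
  refine (Submodule.span_le (p := (Submodule.span K (Set.range X)).comap
    (linearDerivation L : End K (MvPolynomial σ K)))).mpr ?_ hx
  rintro _ ⟨i, rfl⟩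
  rw [SetLike.mem_coe, Submodule.mem_comap, Derivation.coeFn_coe, linearDerivation_X]
  exact Submodule.sum_mem _ fun j _ => Submodule.smul_mem _ _ (Submodule.subset_span ⟨j, rfl⟩)

theorem linearDerivation_comp_linearCombination [DecidableEq σ] (L : Matrix σ σ K) :
    (linearDerivation L : End K (MvPolynomial σ K)) ∘ₗ Fintype.linearCombination K X =
      Fintype.linearCombination K X ∘ₗ Lᵀ.toLin' := by
  refine LinearMap.pi_ext' fun i => LinearMap.ext_ring ?_
  simp [Fintype.linearCombination_apply, linearDerivation_X, Pi.single_apply]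

theorem X_mem_iSup_maxGenEigenspace [DecidableEq σ] [IsAlgClosed K] {L : Matrix σ σ K}
    {lam : σ → K} (hchar : L.charpoly = ∏ i, (Polynomial.X - Polynomial.C (lam i))) (i : σ) :
    X i ∈ ⨆ j,
      End.maxGenEigenspace (linearDerivation L : End K (MvPolynomial σ K)) (lam j) := by
  have hX : X i = Fintype.linearCombination K (X : σ → MvPolynomial σ K) (Pi.single i 1) := by
    simp [Fintype.linearCombination_apply, Pi.single_apply]
  have hmem : Pi.single i 1 ∈ ⨆ j, End.maxGenEigenspace Lᵀ.toLin' (lam j) := by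
    rw [Matrix.iSup_maxGenEigenspace_toLin'_eq_top (by rwa [Matrix.charpoly_transpose])]
    exact Submodule.mem_top
  rw [hX]
  refine (Submodule.map_iSup _ _).trans_le (iSup_mono fun j => ?_)
    (Submodule.mem_map_of_mem hmem)
  exact End.map_maxGenEigenspace_le_of_comp_eq
    (linearDerivation_comp_linearCombination L).symm _

end LinearDerivation

section Spectrum

variable (L : Matrix σ σ K) (lam : σ → K)

noncomputable def genEigenspaceOfDegree (k : ℕ) : Submodule K (MvPolynomial σ K) :=
  ⨆ α : {α : σ →₀ ℕ // α.degree = k},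
    End.maxGenEigenspace (linearDerivation L : End K (MvPolynomial σ K)) (Finsupp.weight lam α.1)

theorem one_le_genEigenspaceOfDegree_zero : 1 ≤ genEigenspaceOfDegree L lam 0 := by
  rw [Submodule.one_le]
  refine Submodule.mem_iSup_of_mem ⟨0, map_zero _⟩ ?_
  rw [map_zero]
  exact End.eigenspace_le_maxGenEigenspace (End.mem_eigenspace_iff.mpr (by simp))

theorem genEigenspaceOfDegree_mul_le (a b : ℕ) :
    genEigenspaceOfDegree L lam a * genEigenspaceOfDegree L lam b ≤
      genEigenspaceOfDegree L lam (a + b) := by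
  rw [genEigenspaceOfDegree, Submodule.iSup_mul]
  refine iSup_le fun α => ?_
  rw [genEigenspaceOfDegree, Submodule.mul_iSup]
  refine iSup_le fun β => Submodule.mul_le.mpr fun x hx y hy => ?_
  refine Submodule.mem_iSup_of_mem ⟨α + β, by rw [map_add, α.2, β.2]⟩ ?_
  rw [map_add]
  exact (linearDerivation L).mul_mem_maxGenEigenspace hx hy

variable {L lam} [DecidableEq σ] [IsAlgClosed K]

theorem homogeneousSubmodule_one_le_genEigenspaceOfDegree
    (hchar : L.charpoly = ∏ i, (Polynomial.X - Polynomial.C (lam i))) :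
    homogeneousSubmodule σ K 1 ≤ genEigenspaceOfDegree L lam 1 := by
  rw [homogeneousSubmodule_one_eq_span_X, Submodule.span_le]
  rintro _ ⟨i, rfl⟩
  refine (show ⨆ j, _ ≤ genEigenspaceOfDegree L lam 1 from iSup_le fun j => ?_)
    (X_mem_iSup_maxGenEigenspace hchar i)
  exact le_iSup_of_le (f := fun α : {α : σ →₀ ℕ // α.degree = 1} => End.maxGenEigenspace
    (linearDerivation L : End K (MvPolynomial σ K)) (Finsupp.weight lam α.1))
    ⟨Finsupp.single j 1, Finsupp.degree_single j 1⟩ (by simp [Finsupp.weight_single])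

theorem homogeneousSubmodule_le_genEigenspaceOfDegree
    (hchar : L.charpoly = ∏ i, (Polynomial.X - Polynomial.C (lam i))) (k : ℕ) :
    homogeneousSubmodule σ K k ≤ genEigenspaceOfDegree L lam k := by
  rw [← homogeneousSubmodule_one_pow]
  induction k with
  | zero => exact one_le_genEigenspaceOfDegree_zero L lam
  | succ k ih =>
    rw [pow_succ]
    exact (mul_le_mul' ih (homogeneousSubmodule_one_le_genEigenspaceOfDegree hchar)).trans
      (genEigenspaceOfDegree_mul_le L lam k 1)

theorem exists_weight_eq_of_isHomogeneous
    (hchar : L.charpoly = ∏ i, (Polynomial.X - Polynomial.C (lam i))) {k : ℕ}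
    {q : MvPolynomial σ K} (hq : q.IsHomogeneous k) (hq0 : q ≠ 0) {μ : K}
    (hμ : linearDerivation L q = μ • q) :
    ∃ α : σ →₀ ℕ, α.degree = k ∧ Finsupp.weight lam α = μ := by
  by_contra! hne
  have hle : genEigenspaceOfDegree L lam k ≤
      ⨆ (w) (_ : w ≠ μ),
        End.maxGenEigenspace (linearDerivation L : End K (MvPolynomial σ K)) w :=
    iSup_le fun α => le_iSup₂_of_le (Finsupp.weight lam α.1) (hne α α.2) le_rfl
  exact hq0 (Submodule.disjoint_def.mp (End.independent_maxGenEigenspace _ μ) q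
    (End.eigenspace_le_maxGenEigenspace (End.mem_eigenspace_iff.mpr hμ))
    (hle (homogeneousSubmodule_le_genEigenspaceOfDegree hchar k hq)))

end Spectrum

section Jet

theorem coe_linearDerivation_sub_mem_sq
    {V : Derivation K (MvPowerSeries σ K) (MvPowerSeries σ K)} {L : Matrix σ σ K}
    (hX : ∀ i, V (MvPowerSeries.X i) - ∑ j, L i j • MvPowerSeries.X j ∈
      Ideal.span (Set.range MvPowerSeries.X) ^ 2)
    {q : MvPolynomial σ K} (hq : q ∈ homogeneousSubmodule σ K 1) :
    V q - ↑(linearDerivation L q) ∈ Ideal.span (Set.range MvPowerSeries.X) ^ 2 := by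
  rw [homogeneousSubmodule_one_eq_span_X] at hq
  induction hq using Submodule.span_induction with
  | mem _ h =>
    obtain ⟨i, rfl⟩ := h
    rw [coe_X, coe_linearDerivation_X]
    exact hX i
  | zero => simp
  | add x y _ _ hx hy =>
    convert add_mem hx hy using 1
    simp only [coe_add, map_add]
    abel
  | smul c x _ hx =>
    rw [coe_smul, Derivation.map_smul, Derivation.map_smul, coe_smul, ← smul_sub]
    exact Submodule.smul_of_tower_mem _ c hx

variable [CharZero K]

theorem IsHomogeneous.coe_mem_span_X_pow {q : MvPolynomial σ K} {k : ℕ}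
    (hq : q.IsHomogeneous k) :
    (q : MvPowerSeries σ K) ∈ Ideal.span (Set.range MvPowerSeries.X) ^ k :=
  MvPowerSeries.mem_span_X_pow_of_le_order <| MvPowerSeries.le_order fun β hβ => by
    rw [coeff_coe, hq.coeff_eq_zero (ENat.natCast_lt_natCast.mp hβ).ne]

theorem coe_linearDerivation_sub_mem_span_X_pow
    {V : Derivation K (MvPowerSeries σ K) (MvPowerSeries σ K)} {L : Matrix σ σ K}
    (hX : ∀ i, V (MvPowerSeries.X i) - ∑ j, L i j • MvPowerSeries.X j ∈
      Ideal.span (Set.range MvPowerSeries.X) ^ 2)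
    {k : ℕ} {q : MvPolynomial σ K} (hq : q.IsHomogeneous k) :
    V q - ↑(linearDerivation L q) ∈ Ideal.span (Set.range MvPowerSeries.X) ^ (k + 1) := by
  induction k generalizing q with
  | zero =>
    rw [← mem_homogeneousSubmodule, ← homogeneousSubmodule_one_pow, pow_zero] at hq
    obtain ⟨r, rfl⟩ := Submodule.mem_one.mp hq
    simp [MvPowerSeries.c_eq_algebraMap]
  | succ k ih =>
    rw [← mem_homogeneousSubmodule, ← homogeneousSubmodule_one_pow, pow_succ] at hq
    refine Submodule.mul_induction_on hq (fun a ha b hb => ?_) (fun a b ha hb => ?_)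
    · rw [homogeneousSubmodule_one_pow] at ha
      have hleib : V ↑(a * b) - ↑(linearDerivation L (a * b)) =
          ↑a * (V b - ↑(linearDerivation L b)) + ↑b * (V a - ↑(linearDerivation L a)) := by
        simp only [coe_mul, Derivation.leibniz, smul_eq_mul, coe_add]
        ring
      rw [hleib]
      refine add_mem ?_ ?_
      · rw [show k + 1 + 1 = k + 2 by ring, pow_add]
        exact Ideal.mul_mem_mul (IsHomogeneous.coe_mem_span_X_pow ha)
          (coe_linearDerivation_sub_mem_sq hX hb)
      · rw [pow_succ']
        exact Ideal.mul_mem_mul (by simpa using IsHomogeneous.coe_mem_span_X_pow (k := 1) hb)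
          (ih ha)
    · convert add_mem ha hb using 1
      simp only [coe_add, map_add]
      abel

theorem linearDerivation_eq_smul_of_sub_mem
    {V : Derivation K (MvPowerSeries σ K) (MvPowerSeries σ K)} {L : Matrix σ σ K}
    (hV : ∀ f ∈ Ideal.span (Set.range MvPowerSeries.X),
      V f ∈ Ideal.span (Set.range MvPowerSeries.X))
    (hX : ∀ i, V (MvPowerSeries.X i) - ∑ j, L i j • MvPowerSeries.X j ∈
      Ideal.span (Set.range MvPowerSeries.X) ^ 2)
    {k : ℕ} {q : MvPolynomial σ K} (hq : q.IsHomogeneous k) {f : MvPowerSeries σ K}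
    (hfq : f - q ∈ Ideal.span (Set.range MvPowerSeries.X) ^ (k + 1))
    {μ : K} (hVf : V f - μ • f ∈ Ideal.span (Set.range MvPowerSeries.X) ^ (k + 1)) :
    linearDerivation L q = μ • q := by
  have hsub : ((linearDerivation L q - μ • q : MvPolynomial σ K) : MvPowerSeries σ K) =
      linearDerivation L q - μ • (q : MvPowerSeries σ K) := by
    rw [← coe_smul]
    exact map_sub (coeToMvPowerSeries.ringHom (σ := σ) (R := K)) _ _
  have hjet : ((linearDerivation L q - μ • q : MvPolynomial σ K) : MvPowerSeries σ K) =
      (V f - μ • f) - V (f - q) + μ • (f - q) - (V q - ↑(linearDerivation L q)) := by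
    rw [hsub, map_sub, smul_sub]
    abel
  refine sub_eq_zero.mp (IsHomogeneous.eq_zero_of_coe_mem_span_X_pow
    (sub_mem (linearDerivation_mem_homogeneousSubmodule L hq) (Submodule.smul_mem _ μ hq)) ?_)
  rw [hjet]
  exact sub_mem (add_mem (sub_mem hVf (V.mapsTo_ideal_pow hV _ _ hfq))
    (Submodule.smul_of_tower_mem _ μ hfq)) (coe_linearDerivation_sub_mem_span_X_pow hX hq)

end Jet

end MvPolynomial

/-- Let `V` be a derivation of `ℂ[[x₁,…,xₙ]]` preserving the maximal ideal `𝔪`, with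
linear part having eigenvalues `λ₁,…,λₙ`. Every eigenvalue `μ` of the induced operator
`j^p V` on `𝔪/𝔪^(p+1)` (i.e. `μ` admitting an eigenvector: some `f ∈ 𝔪`, `f ∉ 𝔪^(p+1)`,
with `V f ≡ μ f mod 𝔪^(p+1)`) lies in the additive semigroup
`{Σᵢ αᵢλᵢ : α ∈ ℕⁿ, 1 ≤ |α| ≤ p}` generated by `λ₁,…,λₙ`. -/
theorem derivation_jet_spectrum_subset (n : ℕ)
    (𝔪 : Ideal (MvPowerSeries (Fin n) ℂ))
    (h𝔪 : 𝔪 = Ideal.span (Set.range (X : Fin n → MvPowerSeries (Fin n) ℂ)))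
    (V : Derivation ℂ (MvPowerSeries (Fin n) ℂ) (MvPowerSeries (Fin n) ℂ))
    (hVm : ∀ f ∈ 𝔪, V f ∈ 𝔪)
    (L : Matrix (Fin n) (Fin n) ℂ)
    (hL : ∀ i j, L i j = coeff (Finsupp.single j 1) (V (X i)))
    (lam : Fin n → ℂ)
    (hchar : L.charpoly = ∏ i, (Polynomial.X - Polynomial.C (lam i)))
    (p : ℕ) (μ : ℂ)
    (hμ : ∃ f : MvPowerSeries (Fin n) ℂ,
      f ∈ 𝔪 ∧ f ∉ 𝔪 ^ (p + 1) ∧ V f - μ • f ∈ 𝔪 ^ (p + 1)) :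
    ∃ α : Fin n →₀ ℕ, 1 ≤ (∑ i, α i) ∧ (∑ i, α i) ≤ p ∧
      μ = ∑ i, (α i : ℂ) * lam i := by
  subst h𝔪
  obtain ⟨f, hf, hfp, hVf⟩ := hμ
  obtain ⟨k, hk, hk1, hkp⟩ := exists_order_eq_of_mem_of_notMem hf hfp
  obtain ⟨q, hq, hq0, hfq⟩ := exists_isHomogeneous_sub_mem hk
  have hX : ∀ i, V (X i) - ∑ j, L i j • X j ∈ Ideal.span (Set.range X) ^ 2 := fun i => by
    simpa only [hL] using sub_linearPart_mem_sq (hVm _ (Ideal.subset_span ⟨i, rfl⟩))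
  have hD := MvPolynomial.linearDerivation_eq_smul_of_sub_mem hVm hX hq hfq
    (Ideal.pow_le_pow_right (by omega : k + 1 ≤ p + 1) hVf)
  obtain ⟨α, hα, rfl⟩ := MvPolynomial.exists_weight_eq_of_isHomogeneous hchar hq hq0 hD
  have hsum : ∑ i, α i = k := by rw [← Finsupp.degree_eq_sum, hα]
  refine ⟨α, hsum ▸ hk1, hsum ▸ hkp, ?_⟩
  rw [Finsupp.weight_apply, Finsupp.sum_fintype _ _ (by simp)]
  simp [nsmul_eq_mul]
end
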